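/- arXiv:1503.03156 — 4 statements merged into one kernel-verified Lean document; each statement's English description precedes it below -/
import Mathlib

section
/- Let p be an odd prime and r, m positive integers. Then the following exact identity of rational numbers holds: Σ_{i+j+k=mp^r, i,j,k∈𝒫_p} 1/(ijk) = (6/(m·p^r)) · Σ_{1 ≤ j < l ≤ mp^r, with j, l, l−j ∈ 𝒫_p} 1/(jl), where the first sum is over triples of positive integers summing to m·p^r with all entries coprime to p. -/
/-!
For `i + j + k = n` we have `1/(ijk) = (1/n)(1/(ij) + 1/(jk) + 1/(ik))`, and the set of
triples is symmetric, so the triple sum is `(3/n) Σ 1/(ij)`. Since `p ∣ n`, the condition that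
`k = n - (i + j)` is coprime to `p` says that `i + j` is, so `(i, j) ↦ (i, i + j)` identifies
the triples with the pairs `j < l` for which `j`, `l`, `l - j` are coprime to `p`. This turns
`Σ 1/(ij)` into `Σ 1/(j(l - j)) = Σ 1/(jl) + Σ 1/((l - j)l)`, and the reflection `j ↦ l - j`
shows that the last two sums agree.
-/

open Finset

theorem Nat.coprime_sub_iff_of_dvd {n a p : ℕ} (hpn : p ∣ n) (ha : a ≤ n) :
    Coprime (n - a) p ↔ Coprime a p := by
  obtain ⟨k, rfl⟩ := hpn
  rw [← Nat.isCoprime_iff_coprime, ← Nat.isCoprime_iff_coprime, Nat.cast_sub ha, Nat.cast_mul,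
    sub_eq_neg_add, mul_comm, IsCoprime.add_mul_right_left_iff, IsCoprime.neg_left_iff]

theorem Nat.Coprime.lt_of_dvd {n a p : ℕ} (hap : Coprime a p) (hp : p ≠ 1) (hpn : p ∣ n)
    (ha : a ≤ n) : a < n :=
  ha.lt_of_ne fun h => hp (Nat.eq_one_of_dvd_coprimes hap (h ▸ hpn) dvd_rfl)

def coprimeCompositions (k n p : ℕ) : Finset (Fin k → ℕ) :=
  (Nat.antidiagonalTuple k n).filter fun v => ∀ i, 0 < v i ∧ Nat.Coprime (v i) p

def coprimeGapPairs (n p : ℕ) : Finset (ℕ × ℕ) :=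
  (Icc 1 n ×ˢ Icc 1 n).filter fun q =>
    q.1 < q.2 ∧ Nat.Coprime q.1 p ∧ Nat.Coprime q.2 p ∧ Nat.Coprime (q.2 - q.1) p

section

variable {k n p : ℕ}

theorem mem_coprimeCompositions {v : Fin k → ℕ} :
    v ∈ coprimeCompositions k n p ↔
      ∑ i, v i = n ∧ ∀ i, 0 < v i ∧ Nat.Coprime (v i) p := by
  rw [coprimeCompositions, mem_filter, Nat.mem_antidiagonalTuple]

theorem mem_coprimeCompositions_three {v : Fin 3 → ℕ} :
    v ∈ coprimeCompositions 3 n p ↔ v 0 + v 1 + v 2 = n ∧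
      (0 < v 0 ∧ Nat.Coprime (v 0) p) ∧ (0 < v 1 ∧ Nat.Coprime (v 1) p) ∧
        (0 < v 2 ∧ Nat.Coprime (v 2) p) := by
  simp only [mem_coprimeCompositions, Fin.sum_univ_three, Fin.forall_fin_succ,
    IsEmpty.forall_iff, and_true]
  rfl

theorem comp_perm_mem_coprimeCompositions {v : Fin k → ℕ} (σ : Equiv.Perm (Fin k)) :
    v ∘ σ ∈ coprimeCompositions k n p ↔ v ∈ coprimeCompositions k n p := by
  simp only [mem_coprimeCompositions, Function.comp_apply, Equiv.sum_comp]
  exact and_congr_right fun _ =>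
    σ.forall_congr_right (q := fun i => 0 < v i ∧ Nat.Coprime (v i) p)

theorem sum_coprimeCompositions_comp_perm {M : Type*} [AddCommMonoid M]
    (f : (Fin k → ℕ) → M) (σ : Equiv.Perm (Fin k)) :
    ∑ v ∈ coprimeCompositions k n p, f (v ∘ σ) = ∑ v ∈ coprimeCompositions k n p, f v :=
  sum_nbij' (· ∘ σ) (· ∘ σ.symm) (fun v hv => (comp_perm_mem_coprimeCompositions σ).2 hv)
    (fun v hv => (comp_perm_mem_coprimeCompositions σ.symm).2 hv)
    (fun v _ => by simp [Function.comp_assoc]) (fun v _ => by simp [Function.comp_assoc])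
    fun _ _ => rfl

theorem mem_coprimeGapPairs {j l : ℕ} :
    (j, l) ∈ coprimeGapPairs n p ↔ 0 < j ∧ j < l ∧ l ≤ n ∧
      Nat.Coprime j p ∧ Nat.Coprime l p ∧ Nat.Coprime (l - j) p := by
  simp only [coprimeGapPairs, mem_filter, mem_product, mem_Icc]
  constructor
  · rintro ⟨⟨⟨hj, -⟩, -, hl⟩, hjl, hcop⟩
    exact ⟨hj, hjl, hl, hcop⟩
  · rintro ⟨hj, hjl, hl, hcop⟩
    exact ⟨⟨⟨hj, by omega⟩, by omega, hl⟩, hjl, hcop⟩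

theorem sum_coprimeCompositions_three_inv_prod :
    ∑ v ∈ coprimeCompositions 3 n p, 1 / ((v 0 : ℚ) * v 1 * v 2) =
      3 / n * ∑ v ∈ coprimeCompositions 3 n p, 1 / ((v 0 : ℚ) * v 1) := by
  set f : (Fin 3 → ℕ) → ℚ := fun v => 1 / ((v 0 : ℚ) * v 1)
  have hsplit : ∀ v ∈ coprimeCompositions 3 n p, 1 / ((v 0 : ℚ) * v 1 * v 2) =
      1 / n * (f v + f (v ∘ finRotate 3) + f (v ∘ Equiv.swap 1 2)) := by
    intro v hv
    obtain ⟨hsum, ⟨h0, -⟩, ⟨h1, -⟩, ⟨h2, -⟩⟩ := mem_coprimeCompositions_three.1 hv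
    have hsum' : (v 0 : ℚ) + v 1 + v 2 = n := by exact_mod_cast hsum
    simp only [f, Function.comp_apply]
    rw [show finRotate 3 0 = 1 from rfl, show finRotate 3 1 = 2 from rfl,
      Equiv.swap_apply_of_ne_of_ne (by decide) (by decide), Equiv.swap_apply_left, ← hsum']
    field_simp
    ring
  rw [sum_congr rfl hsplit, ← mul_sum, sum_add_distrib, sum_add_distrib,
    sum_coprimeCompositions_comp_perm f, sum_coprimeCompositions_comp_perm f]
  ring

theorem sum_coprimeCompositions_inv_mul_eq_sum_coprimeGapPairs (hp : p ≠ 1) (hpn : p ∣ n) :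
    ∑ v ∈ coprimeCompositions 3 n p, 1 / ((v 0 : ℚ) * v 1) =
      ∑ q ∈ coprimeGapPairs n p, 1 / ((q.1 : ℚ) * (q.2 - q.1 : ℕ)) := by
  refine sum_nbij' (fun v => (v 0, v 0 + v 1)) (fun q => ![q.1, q.2 - q.1, n - q.2])
    ?_ ?_ ?_ ?_ ?_
  · intro v hv
    obtain ⟨hsum, ⟨h0, c0⟩, ⟨h1, c1⟩, ⟨-, c2⟩⟩ := mem_coprimeCompositions_three.1 hv
    have hl : v 0 + v 1 = n - v 2 := by omega
    refine mem_coprimeGapPairs.2 ⟨h0, by omega, by omega, c0, ?_, by simpa using c1⟩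
    rwa [hl, Nat.coprime_sub_iff_of_dvd hpn (by omega)]
  · rintro ⟨j, l⟩ hq
    obtain ⟨hj, hjl, hl, cj, cl, clj⟩ := mem_coprimeGapPairs.1 hq
    have hln : l < n := cl.lt_of_dvd hp hpn hl
    refine mem_coprimeCompositions_three.2 ⟨?_, ⟨hj, cj⟩, ⟨by simpa using hjl, clj⟩, ⟨?_, ?_⟩⟩
    · simp only [Matrix.cons_val_zero, Matrix.cons_val_one, Matrix.cons_val_two,
        Matrix.tail_cons, Matrix.head_cons]
      omega
    · simpa using hln
    · simpa [Nat.coprime_sub_iff_of_dvd hpn hl] using cl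
  · intro v hv
    obtain ⟨hsum, -⟩ := mem_coprimeCompositions_three.1 hv
    ext i
    fin_cases i <;> simp [← hsum]
  · rintro ⟨j, l⟩ hq
    obtain ⟨-, hjl, -⟩ := mem_coprimeGapPairs.1 hq
    simp only [Matrix.cons_val_zero, Matrix.cons_val_one, Prod.mk.injEq, true_and]
    omega
  · intro v _
    simp

theorem sum_coprimeGapPairs_inv_mul_sub :
    ∑ q ∈ coprimeGapPairs n p, 1 / ((q.1 : ℚ) * (q.2 - q.1 : ℕ)) =
      2 * ∑ q ∈ coprimeGapPairs n p, 1 / ((q.1 : ℚ) * q.2) := by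
  have hreflect : ∀ q ∈ coprimeGapPairs n p, (q.2 - q.1, q.2) ∈ coprimeGapPairs n p := by
    rintro ⟨j, l⟩ hq
    obtain ⟨hj, hjl, hl, cj, cl, clj⟩ := mem_coprimeGapPairs.1 hq
    exact mem_coprimeGapPairs.2 ⟨by omega, by omega, hl, clj, cl, by rwa [Nat.sub_sub_self hjl.le]⟩
  have hsplit : ∀ q ∈ coprimeGapPairs n p, 1 / ((q.1 : ℚ) * (q.2 - q.1 : ℕ)) =
      1 / ((q.1 : ℚ) * q.2) + 1 / (((q.2 - q.1 : ℕ) : ℚ) * q.2) := by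
    rintro ⟨j, l⟩ hq
    obtain ⟨hj, hjl, -⟩ := mem_coprimeGapPairs.1 hq
    have hj' : (j : ℚ) ≠ 0 := by positivity
    have hlj : ((l - j : ℕ) : ℚ) ≠ 0 := by exact_mod_cast (Nat.sub_pos_of_lt hjl).ne'
    rw [Nat.cast_sub hjl.le] at hlj ⊢
    have hl : (l : ℚ) ≠ 0 := by exact_mod_cast (hj.trans hjl).ne'
    field_simp
    ring
  have hswap : ∑ q ∈ coprimeGapPairs n p, 1 / (((q.2 - q.1 : ℕ) : ℚ) * q.2) =
      ∑ q ∈ coprimeGapPairs n p, 1 / ((q.1 : ℚ) * q.2) :=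
    sum_nbij' (fun q => (q.2 - q.1, q.2)) (fun q => (q.2 - q.1, q.2)) hreflect hreflect
      (fun q hq => by
        obtain ⟨-, hjl, -⟩ := mem_coprimeGapPairs.1 hq
        simp [Nat.sub_sub_self hjl.le])
      (fun q hq => by
        obtain ⟨-, hjl, -⟩ := mem_coprimeGapPairs.1 hq
        simp [Nat.sub_sub_self hjl.le])
      fun _ _ => rfl
  rw [sum_congr rfl hsplit, sum_add_distrib, hswap, two_mul]

theorem sum_coprimeCompositions_three_inv_prod_eq (hp : p ≠ 1) (hpn : p ∣ n) :
    ∑ v ∈ coprimeCompositions 3 n p, 1 / ((v 0 : ℚ) * v 1 * v 2) =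
      6 / n * ∑ q ∈ coprimeGapPairs n p, 1 / ((q.1 : ℚ) * q.2) := by
  rw [sum_coprimeCompositions_three_inv_prod,
    sum_coprimeCompositions_inv_mul_eq_sum_coprimeGapPairs hp hpn, sum_coprimeGapPairs_inv_mul_sub]
  ring

end

theorem harmonic_three_sum_eq_pair_sum_general (p : ℕ) (hp : p.Prime)
    (r m : ℕ) (hr : 0 < r) :
    (∑ v ∈ (Finset.Nat.antidiagonalTuple 3 (m * p ^ r)).filter
        (fun v => ∀ i, 0 < v i ∧ Nat.Coprime (v i) p),
      1 / ((v 0 : ℚ) * (v 1 : ℚ) * (v 2 : ℚ))) =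
    (6 / ((m : ℚ) * (p : ℚ) ^ r)) *
      ∑ q ∈ (Finset.Icc 1 (m * p ^ r) ×ˢ Finset.Icc 1 (m * p ^ r)).filter
          (fun q => q.1 < q.2 ∧ Nat.Coprime q.1 p ∧ Nat.Coprime q.2 p ∧
            Nat.Coprime (q.2 - q.1) p),
        1 / ((q.1 : ℚ) * (q.2 : ℚ)) := by
  have hpn : p ∣ m * p ^ r := (dvd_pow_self p hr.ne').mul_left m
  have h := sum_coprimeCompositions_three_inv_prod_eq hp.one_lt.ne' hpn
  rwa [Nat.cast_mul, Nat.cast_pow] at h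

theorem harmonic_three_sum_eq_pair_sum (p : ℕ) (hp : p.Prime) (hodd : Odd p)
    (r m : ℕ) (hr : 0 < r) (hm : 0 < m) :
    (∑ v ∈ (Finset.Nat.antidiagonalTuple 3 (m * p ^ r)).filter
        (fun v => ∀ i, 0 < v i ∧ Nat.Coprime (v i) p),
      1 / ((v 0 : ℚ) * (v 1 : ℚ) * (v 2 : ℚ))) =
    (6 / ((m : ℚ) * (p : ℚ) ^ r)) *
      ∑ q ∈ (Finset.Icc 1 (m * p ^ r) ×ˢ Finset.Icc 1 (m * p ^ r)).filter
          (fun q => q.1 < q.2 ∧ Nat.Coprime q.1 p ∧ Nat.Coprime q.2 p ∧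
            Nat.Coprime (q.2 - q.1) p),
        1 / ((q.1 : ℚ) * (q.2 : ℚ)) :=
  harmonic_three_sum_eq_pair_sum_general p hp r m hr
end

section
/- Let p > 5 be a prime and r, m positive integers. Then the following exact identity of rational numbers holds: Σ_{i1+i2+i3+i4+i5=mp^r, all ij∈𝒫_p} 1/(i1·i2·i3·i4·i5) = (120/(m·p^r)) · Σ_{1 ≤ u1 < u2 < u3 < u4 ≤ mp^r, with u1, u4, u2−u1, u3−u2, u4−u3 ∈ 𝒫_p} 1/(u1·u2·u3·u4), where the first sum is over quintuples of positive integers summing to m·p^r with all entries coprime to p. -/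
/-!
For positive `x₁, …, xₙ` one has the partial-fraction identity
`∑_σ ∏_k 1 / (x_{σ k} + ⋯ + x_{σ n}) = 1 / (x₁ ⋯ xₙ)`: the first factor is always the full sum,
and summing the rest over the choice of `σ 1` gives, by induction,
`∑_q x_q / (x₁ ⋯ xₙ)`, which cancels it.
Apply it to every composition of `N = m pʳ` into five parts prime to `p`. Permuting the parts
preserves the set of compositions, so the left side is `120 / N` times the sum of
`1 / (u₁ u₂ u₃ u₄)` over the suffix sums `u₁ < u₂ < u₃ < u₄ < N` of the compositions. As `p ∣ N`,
the part `N - u₄` is prime to `p` exactly when `u₄` is, and `u₄ = N` is excluded because `N`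
itself is not prime to `p`.
-/

open Finset

theorem Nat.Coprime.sub_of_dvd {a N p : ℕ} (hpN : p ∣ N) (ha : a ≤ N) (h : a.Coprime p) :
    (N - a).Coprime p := by
  have hd : (N - a).gcd p ∣ a := by
    have := Nat.dvd_sub ((Nat.gcd_dvd_right _ _).trans hpN) (Nat.gcd_dvd_left (N - a) p)
    rwa [Nat.sub_sub_self ha] at this
  exact Nat.eq_one_of_dvd_one (h ▸ Nat.dvd_gcd hd (Nat.gcd_dvd_right _ _))

theorem mul_prod_swap_zero_succ {M : Type*} [CommMonoid M] {n : ℕ} (x : Fin (n + 1) → M)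
    (q : Fin (n + 1)) : x q * ∏ i : Fin n, x (Equiv.swap 0 q i.succ) = ∏ i, x i := by
  rw [← Equiv.prod_comp (Equiv.swap 0 q) x, Fin.prod_univ_succ, Equiv.swap_apply_left]

theorem sum_perm_prod_inv_sum_Ici {K : Type*} [Field K] [LinearOrder K] [IsStrictOrderedRing K] :
    ∀ {n : ℕ} (x : Fin n → K), (∀ i, 0 < x i) →
      ∑ σ : Equiv.Perm (Fin n), ∏ k, (∑ j ∈ Ici k, x (σ j))⁻¹ = ∏ i, (x i)⁻¹
  | 0, _, _ => by simp
  | n + 1, x, hx => by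
    have hS : ∑ i, x i ≠ 0 := (sum_pos (fun i _ => hx i) univ_nonempty).ne'
    have hfirst : ∀ q τ, ∏ k, (∑ j ∈ Ici k, x (Equiv.Perm.decomposeFin.symm (q, τ) j))⁻¹ =
        (∑ i, x i)⁻¹ * ∏ k : Fin n, (∑ j ∈ Ici k, x (Equiv.swap 0 q (τ j).succ))⁻¹ := by
      intro q τ
      rw [Fin.prod_univ_succ, show Ici (0 : Fin (n + 1)) = univ from Ici_bot, Equiv.sum_comp]
      simp only [Fin.sum_Ici_succ, Equiv.Perm.decomposeFin_symm_apply_succ]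
    have hrest : ∀ q, ∑ τ : Equiv.Perm (Fin n),
        ∏ k, (∑ j ∈ Ici k, x (Equiv.swap 0 q (τ j).succ))⁻¹ = x q * ∏ i, (x i)⁻¹ := by
      intro q
      rw [sum_perm_prod_inv_sum_Ici (fun i => x (Equiv.swap 0 q i.succ)) (fun _ => hx _),
        prod_inv_distrib, prod_inv_distrib, ← mul_prod_swap_zero_succ x q, mul_inv,
        mul_inv_cancel_left₀ (hx q).ne']
    rw [← Equiv.sum_comp Equiv.Perm.decomposeFin.symm, Fintype.sum_prod_type]
    simp only [hfirst, ← mul_sum, hrest, ← sum_mul, inv_mul_cancel_left₀ hS]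

theorem prod_inv_sum_Ici_five {K : Type*} [Field K] (x : Fin 5 → K) :
    ∏ k, (∑ j ∈ Ici k, x j)⁻¹ =
      (∑ i, x i)⁻¹ * (x 4 * (x 3 + x 4) * (x 2 + x 3 + x 4) * (x 1 + x 2 + x 3 + x 4))⁻¹ := by
  rw [Fin.prod_univ_five, Fin.sum_univ_five, show Ici (0 : Fin 5) = {0, 1, 2, 3, 4} by decide,
    show Ici (1 : Fin 5) = {1, 2, 3, 4} by decide, show Ici (2 : Fin 5) = {2, 3, 4} by decide,
    show Ici (3 : Fin 5) = {3, 4} by decide, show Ici (4 : Fin 5) = {4} by decide]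
  simp only [mem_insert, mem_singleton, Fin.reduceEq, or_self, not_false_eq_true, sum_insert,
    sum_singleton, mul_inv_rev]
  ring

theorem sum_filter_antidiagonalTuple_comp_perm {M : Type*} [AddCommMonoid M] {k N : ℕ}
    (Q : ℕ → Prop) [DecidablePred Q] (σ : Equiv.Perm (Fin k)) (f : (Fin k → ℕ) → M) :
    ∑ v ∈ (Nat.antidiagonalTuple k N).filter (fun v => ∀ i, Q (v i)), f (v ∘ σ) =
      ∑ v ∈ (Nat.antidiagonalTuple k N).filter (fun v => ∀ i, Q (v i)), f v := by
  refine sum_nbij' (· ∘ σ) (· ∘ σ.symm) ?_ ?_ ?_ ?_ (fun _ _ => rfl) <;>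
    simp +contextual [Nat.mem_antidiagonalTuple, Function.comp_def, Equiv.sum_comp]

theorem sum_filter_antidiagonalTuple_five_eq_sum_suffix_sums {M : Type*} [AddCommMonoid M]
    (P : ℕ → Prop) [DecidablePred P] {N : ℕ} (hP : ∀ a ≤ N, P a → P (N - a)) (hN : ¬ P N)
    (g : ℕ × ℕ × ℕ × ℕ → M) :
    ∑ v ∈ (Nat.antidiagonalTuple 5 N).filter (fun v => ∀ i, 0 < v i ∧ P (v i)),
        g (v 4, v 3 + v 4, v 2 + v 3 + v 4, v 1 + v 2 + v 3 + v 4) =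
      ∑ u ∈ (Icc 1 N ×ˢ Icc 1 N ×ˢ Icc 1 N ×ˢ Icc 1 N).filter
          (fun u => u.1 < u.2.1 ∧ u.2.1 < u.2.2.1 ∧ u.2.2.1 < u.2.2.2 ∧
            P u.1 ∧ P u.2.2.2 ∧ P (u.2.1 - u.1) ∧ P (u.2.2.1 - u.2.1) ∧ P (u.2.2.2 - u.2.2.1)),
        g u := by
  refine sum_nbij' (fun v => (v 4, v 3 + v 4, v 2 + v 3 + v 4, v 1 + v 2 + v 3 + v 4))
    (fun u => ![N - u.2.2.2, u.2.2.2 - u.2.2.1, u.2.2.1 - u.2.1, u.2.1 - u.1, u.1])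
    ?_ ?_ ?_ ?_ (fun _ _ => rfl)
  · intro v hv
    simp only [mem_filter, Nat.mem_antidiagonalTuple, Fin.sum_univ_five] at hv
    obtain ⟨hsum, hv⟩ := hv
    obtain ⟨⟨_, h0⟩, ⟨_, h1⟩, ⟨_, h2⟩, ⟨_, h3⟩, ⟨_, h4⟩⟩ : _ ∧ _ ∧ _ ∧ _ ∧ _ :=
      ⟨hv 0, hv 1, hv 2, hv 3, hv 4⟩
    have h0' : P (v 1 + v 2 + v 3 + v 4) := by
      convert hP _ (by omega) h0 using 1; omega
    simp only [mem_filter, mem_product, mem_Icc]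
    refine ⟨by omega, by omega, by omega, by omega, h4, h0', ?_, ?_, ?_⟩ <;>
      simpa only [add_assoc, add_tsub_cancel_right]
  · rintro ⟨u₁, u₂, u₃, u₄⟩ hu
    simp only [mem_filter, mem_product, mem_Icc] at hu
    obtain ⟨⟨⟨hu₁, -⟩, -, -, -, hu₄⟩, h₁₂, h₂₃, h₃₄, h₁, h₄, h₂₁, h₃₂, h₄₃⟩ := hu
    have hu₄N : u₄ < N := lt_of_le_of_ne hu₄ fun h => hN (h ▸ h₄)
    simp only [mem_filter, Nat.mem_antidiagonalTuple, Fin.sum_univ_five, Fin.forall_fin_succ,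
      IsEmpty.forall_iff, and_true, Matrix.cons_val, tsub_pos_iff_lt, Fin.succ_zero_eq_one,
      Fin.succ_one_eq_two, Fin.reduceSucc]
    exact ⟨by omega, ⟨hu₄N, hP _ hu₄ h₄⟩, ⟨h₃₄, h₄₃⟩, ⟨h₂₃, h₃₂⟩, ⟨h₁₂, h₂₁⟩, hu₁, h₁⟩
  · intro v hv
    simp only [mem_filter, Nat.mem_antidiagonalTuple, Fin.sum_univ_five] at hv
    ext i
    fin_cases i <;>
      simp only [Fin.zero_eta, Fin.mk_one, Fin.reduceFinMk, Matrix.cons_val, Matrix.cons_val_zero,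
        Matrix.cons_val_one, add_tsub_cancel_right] <;> omega
  · rintro ⟨u₁, u₂, u₃, u₄⟩ hu
    simp only [mem_filter, mem_product, mem_Icc] at hu
    simp only [Matrix.cons_val, Prod.mk.injEq, true_and]
    omega

theorem harmonic_five_sum_eq_quadruple_sum_general (p : ℕ) (hp : p.Prime)
    (r m : ℕ) (hr : 0 < r) :
    (∑ v ∈ (Finset.Nat.antidiagonalTuple 5 (m * p ^ r)).filter
        (fun v => ∀ i, 0 < v i ∧ Nat.Coprime (v i) p),
      1 / ((v 0 : ℚ) * (v 1 : ℚ) * (v 2 : ℚ) * (v 3 : ℚ) * (v 4 : ℚ))) =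
    (120 / ((m : ℚ) * (p : ℚ) ^ r)) *
      ∑ u ∈ (Finset.Icc 1 (m * p ^ r) ×ˢ Finset.Icc 1 (m * p ^ r) ×ˢ
              Finset.Icc 1 (m * p ^ r) ×ˢ Finset.Icc 1 (m * p ^ r)).filter
          (fun u => u.1 < u.2.1 ∧ u.2.1 < u.2.2.1 ∧ u.2.2.1 < u.2.2.2 ∧
            Nat.Coprime u.1 p ∧ Nat.Coprime u.2.2.2 p ∧
            Nat.Coprime (u.2.1 - u.1) p ∧ Nat.Coprime (u.2.2.1 - u.2.1) p ∧
            Nat.Coprime (u.2.2.2 - u.2.2.1) p),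
        1 / ((u.1 : ℚ) * (u.2.1 : ℚ) * (u.2.2.1 : ℚ) * (u.2.2.2 : ℚ)) := by
  set N := m * p ^ r with hN
  have hpN : p ∣ N := (dvd_pow_self p hr.ne').mul_left m
  have hN_not_coprime : ¬ N.Coprime p := fun h => hp.ne_one (h.symm.eq_one_of_dvd hpN)
  set C := (Nat.antidiagonalTuple 5 N).filter (fun v => ∀ i, 0 < v i ∧ Nat.Coprime (v i) p)
  have hC : ∀ v ∈ C, ∑ i, (v i : ℚ) = N ∧ ∀ i, (0 : ℚ) < v i := fun v hv => by
    rw [mem_filter, Nat.mem_antidiagonalTuple] at hv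
    exact ⟨mod_cast hv.1, fun i => mod_cast (hv.2 i).1⟩
  calc ∑ v ∈ C, 1 / ((v 0 : ℚ) * v 1 * v 2 * v 3 * v 4)
      = ∑ v ∈ C, ∑ σ : Equiv.Perm (Fin 5), ∏ k, (∑ j ∈ Ici k, (v (σ j) : ℚ))⁻¹ := by
        refine sum_congr rfl fun v hv => ?_
        rw [sum_perm_prod_inv_sum_Ici _ (hC v hv).2, Fin.prod_univ_five]
        simp only [one_div, mul_inv]
    _ = ∑ _σ : Equiv.Perm (Fin 5), ∑ v ∈ C, ∏ k, (∑ j ∈ Ici k, (v j : ℚ))⁻¹ := by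
        rw [sum_comm]
        exact sum_congr rfl fun σ _ => sum_filter_antidiagonalTuple_comp_perm
          (fun a => 0 < a ∧ a.Coprime p) σ
          (fun v => ∏ k, (∑ j ∈ Ici k, (v j : ℚ))⁻¹)
    _ = 120 * ∑ v ∈ C, ∏ k, (∑ j ∈ Ici k, (v j : ℚ))⁻¹ := by
        rw [sum_const, card_univ, Fintype.card_perm, Fintype.card_fin, nsmul_eq_mul]
        norm_num [Nat.factorial]
    _ = 120 * ∑ v ∈ C, (N : ℚ)⁻¹ * (1 / ((v 4 : ℕ) * ((v 3 + v 4 : ℕ) : ℚ) *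
          ((v 2 + v 3 + v 4 : ℕ) : ℚ) * ((v 1 + v 2 + v 3 + v 4 : ℕ) : ℚ))) := by
        congr 1
        refine sum_congr rfl fun v hv => ?_
        rw [prod_inv_sum_Ici_five, (hC v hv).1]
        push_cast
        ring
    _ = _ := by
        rw [sum_filter_antidiagonalTuple_five_eq_sum_suffix_sums (·.Coprime p)
          (fun a ha h => h.sub_of_dvd hpN ha) hN_not_coprime
          (fun u => (N : ℚ)⁻¹ * (1 / ((u.1 : ℚ) * u.2.1 * u.2.2.1 * u.2.2.2))), ← mul_sum, hN]
        push_cast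
        ring

theorem harmonic_five_sum_eq_quadruple_sum (p : ℕ) (hp : p.Prime) (hp5 : 5 < p)
    (r m : ℕ) (hr : 0 < r) (hm : 0 < m) :
    (∑ v ∈ (Finset.Nat.antidiagonalTuple 5 (m * p ^ r)).filter
        (fun v => ∀ i, 0 < v i ∧ Nat.Coprime (v i) p),
      1 / ((v 0 : ℚ) * (v 1 : ℚ) * (v 2 : ℚ) * (v 3 : ℚ) * (v 4 : ℚ))) =
    (120 / ((m : ℚ) * (p : ℚ) ^ r)) *
      ∑ u ∈ (Finset.Icc 1 (m * p ^ r) ×ˢ Finset.Icc 1 (m * p ^ r) ×ˢ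
              Finset.Icc 1 (m * p ^ r) ×ˢ Finset.Icc 1 (m * p ^ r)).filter
          (fun u => u.1 < u.2.1 ∧ u.2.1 < u.2.2.1 ∧ u.2.2.1 < u.2.2.2 ∧
            Nat.Coprime u.1 p ∧ Nat.Coprime u.2.2.2 p ∧
            Nat.Coprime (u.2.1 - u.1) p ∧ Nat.Coprime (u.2.2.1 - u.2.1) p ∧
            Nat.Coprime (u.2.2.2 - u.2.2.1) p),
        1 / ((u.1 : ℚ) * (u.2.1 : ℚ) * (u.2.2.1 : ℚ) * (u.2.2.2 : ℚ)) :=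
  harmonic_five_sum_eq_quadruple_sum_general p hp r m hr
end

section
/- Let p ≥ 5 be a prime and r a positive integer. Let S1 = Σ_{i1+i2+i3+i4=2p^r, i1,i2,i3,i4∈𝒫_p} (-1)^{i1}/(i1·i2·i3·i4) and S2 = Σ_{i1+i2+i3+i4=2p^r, i1,i2,i3,i4∈𝒫_p} (-1)^{i1+i2}/(i1·i2·i3·i4), where each sum is over quadruples of positive integers summing to 2p^r with all entries coprime to p. Then the following exact identity of rational numbers holds: 4·S1 + 3·S2 = (1/2)·Σ_{i1+i2+i3+i4=p^r, all ij∈𝒫_p} 1/(i1·i2·i3·i4) − Σ_{i1+i2+i3+i4=2p^r, all ij∈𝒫_p} 1/(i1·i2·i3·i4). -/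
/-!
Write `ε_i = (-1)^(v i)`. Since `∏ (1 + ε_i)` is `16` when all entries are even and `0` otherwise,
summing `∏ (1 + ε_i) / ∏ v_i` over quadruples with sum `2n` picks out the even quadruples
`v = 2w`, and gives exactly the harmonic sum over quadruples `w` with sum `n` (this needs `p` odd,
so that halving preserves coprimality to `p`). On the other hand, the entries sum to an even
number, so `ε_0 ε_1 ε_2 ε_3 = 1` and a product of the `ε_i` over a set of indices equals that over
the complementary set; expanding `∏ (1 + ε_i)` then gives `2 (1 + Σ ε_i + ε_0 ε_1 + ε_0 ε_2 + ε_0 ε_3)`,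
and by the symmetry of the summation range each `ε_i` sums like `ε_0` and each `ε_0 ε_j` like
`ε_0 ε_1`.
-/

open Finset

lemma prod_one_add_neg_one_pow {R ι : Type*} [CommRing R] [Fintype ι] (v : ι → ℕ) :
    ∏ i, (1 + (-1 : R) ^ v i) = if ∀ i, Even (v i) then 2 ^ Fintype.card ι else 0 := by
  split_ifs with h
  · simp [(h _).neg_one_pow, one_add_one_eq_two]
  · obtain ⟨i, hi⟩ := not_forall.mp h
    exact prod_eq_zero (mem_univ i) (by simp [(Nat.not_even_iff_odd.mp hi).neg_one_pow])

lemma one_add_mul_one_add_mul_one_add_mul_one_add_of_mul_eq_one {R : Type*} [CommRing R]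
    {a b c d : R} (ha : a ^ 2 = 1) (hb : b ^ 2 = 1) (hc : c ^ 2 = 1) (hd : d ^ 2 = 1)
    (h : a * b * c * d = 1) :
    (1 + a) * (1 + b) * (1 + c) * (1 + d) =
      2 * (1 + (a + b + c + d) + (a * b + a * c + a * d)) := by
  linear_combination (1 + a + b + c + d + a * b + a * c + a * d) * h
    - (b * c * d + b ^ 2 * c * d + b * c ^ 2 * d + b * c * d ^ 2) * ha
    - (a * c * d + c * d) * hb - (a * b * d + b * d) * hc - (a * b * c + b * c) * hd

namespace Finset.Nat

variable {k n : ℕ} (P : ℕ → Prop) [DecidablePred P]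

lemma comp_perm_mem_antidiagonalTuple {v : Fin k → ℕ} (σ : Equiv.Perm (Fin k)) :
    v ∘ σ ∈ antidiagonalTuple k n ↔ v ∈ antidiagonalTuple k n := by
  simp only [mem_antidiagonalTuple, Function.comp_def, Equiv.sum_comp σ v]

lemma sum_filter_antidiagonalTuple_comp_perm {M : Type*} [AddCommMonoid M]
    (σ : Equiv.Perm (Fin k)) (g : (Fin k → ℕ) → M) :
    ∑ v ∈ (antidiagonalTuple k n).filter (fun v => ∀ i, P (v i)), g (v ∘ σ) =
      ∑ v ∈ (antidiagonalTuple k n).filter (fun v => ∀ i, P (v i)), g v := by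
  have hmem : ∀ (τ : Equiv.Perm (Fin k)) v,
      v ∈ (antidiagonalTuple k n).filter (fun v => ∀ i, P (v i)) →
        v ∘ τ ∈ (antidiagonalTuple k n).filter (fun v => ∀ i, P (v i)) := by
    intro τ v hv
    rw [mem_filter] at hv ⊢
    exact ⟨(comp_perm_mem_antidiagonalTuple τ).2 hv.1, fun i => hv.2 (τ i)⟩
  refine sum_nbij' (· ∘ σ) (· ∘ σ.symm) (hmem σ) (hmem σ.symm) ?_ ?_ fun _ _ => rfl <;>
    intro v _ <;> ext i <;> simp

lemma sum_filter_antidiagonalTuple_comp_perm_div_prod {K : Type*} [Semifield K]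
    (σ : Equiv.Perm (Fin k)) (h : (Fin k → ℕ) → K) :
    ∑ v ∈ (antidiagonalTuple k n).filter (fun v => ∀ i, P (v i)), h (v ∘ σ) / ∏ i, (v i : K) =
      ∑ v ∈ (antidiagonalTuple k n).filter (fun v => ∀ i, P (v i)), h v / ∏ i, (v i : K) := by
  rw [← sum_filter_antidiagonalTuple_comp_perm P σ (fun v => h v / ∏ i, (v i : K))]
  refine sum_congr rfl fun v _ => ?_
  simp only [Function.comp_apply, Equiv.prod_comp σ (fun i => (v i : K))]

lemma sum_filter_even_antidiagonalTuple {M : Type*} [AddCommMonoid M]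
    (hP : ∀ m, P (2 * m) ↔ P m) (f : (Fin k → ℕ) → M) :
    ∑ v ∈ ((antidiagonalTuple k (2 * n)).filter (fun v => ∀ i, P (v i))).filter
        (fun v => ∀ i, Even (v i)), f v =
      ∑ w ∈ (antidiagonalTuple k n).filter (fun w => ∀ i, P (w i)), f (fun i => 2 * w i) := by
  symm
  refine sum_nbij' (fun w i => 2 * w i) (fun v i => v i / 2) ?_ ?_ ?_ ?_ fun _ _ => rfl
  · intro w hw
    simp only [mem_filter, mem_antidiagonalTuple] at hw ⊢
    exact ⟨⟨by rw [← mul_sum, hw.1], fun i => (hP _).2 (hw.2 i)⟩, fun i => even_two_mul _⟩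
  · intro v hv
    simp only [mem_filter, mem_antidiagonalTuple] at hv ⊢
    have hhalf : ∀ i, 2 * (v i / 2) = v i := fun i => Nat.two_mul_div_two_of_even (hv.2 i)
    refine ⟨?_, fun i => (hP _).1 (by rw [hhalf]; exact hv.1.2 i)⟩
    have hsum : 2 * ∑ i, v i / 2 = 2 * n := by
      rw [mul_sum]; simp only [hhalf]; exact hv.1.1
    omega
  · intro w _
    ext i
    simp
  · intro v hv
    rw [mem_filter] at hv
    ext i
    exact Nat.two_mul_div_two_of_even (hv.2 i)

lemma sum_filter_antidiagonalTuple_prod_one_add_neg_one_pow_mul {R : Type*} [CommRing R]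
    (hP : ∀ m, P (2 * m) ↔ P m) (f : (Fin k → ℕ) → R) :
    ∑ v ∈ (antidiagonalTuple k (2 * n)).filter (fun v => ∀ i, P (v i)),
        (∏ i, (1 + (-1 : R) ^ v i)) * f v =
      2 ^ k * ∑ w ∈ (antidiagonalTuple k n).filter (fun w => ∀ i, P (w i)),
        f (fun i => 2 * w i) := by
  simp only [prod_one_add_neg_one_pow, Fintype.card_fin, ite_mul, zero_mul]
  rw [← sum_filter, ← mul_sum, sum_filter_even_antidiagonalTuple P hP]

end Finset.Nat

open Finset.Nat

theorem four_mul_sum_neg_one_pow_add_three_mul_sum_neg_one_pow {K : Type*} [Field K]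
    [NeZero (2 : K)] (P : ℕ → Prop) [DecidablePred P] (hP : ∀ m, P (2 * m) ↔ P m) (n : ℕ) :
    4 * ∑ v ∈ (antidiagonalTuple 4 (2 * n)).filter (fun v => ∀ i, P (v i)),
        (-1 : K) ^ v 0 / ∏ i, (v i : K) +
      3 * ∑ v ∈ (antidiagonalTuple 4 (2 * n)).filter (fun v => ∀ i, P (v i)),
        (-1 : K) ^ (v 0 + v 1) / ∏ i, (v i : K) =
    1 / 2 * ∑ v ∈ (antidiagonalTuple 4 n).filter (fun v => ∀ i, P (v i)), 1 / ∏ i, (v i : K) -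
      ∑ v ∈ (antidiagonalTuple 4 (2 * n)).filter (fun v => ∀ i, P (v i)),
        1 / ∏ i, (v i : K) := by
  set A := (antidiagonalTuple 4 (2 * n)).filter (fun v => ∀ i, P (v i))
  have hsingle : ∀ i, ∑ v ∈ A, (-1 : K) ^ v i / ∏ l, (v l : K) =
      ∑ v ∈ A, (-1 : K) ^ v 0 / ∏ l, (v l : K) := fun i => by
    simpa using sum_filter_antidiagonalTuple_comp_perm_div_prod P (Equiv.swap 0 i)
      (fun v => (-1 : K) ^ v 0)
  have hpair : ∀ j ≠ 0, ∑ v ∈ A, (-1 : K) ^ (v 0 + v j) / ∏ l, (v l : K) =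
      ∑ v ∈ A, (-1 : K) ^ (v 0 + v 1) / ∏ l, (v l : K) := fun j hj => by
    simpa [Equiv.swap_apply_of_ne_of_ne, hj.symm] using
      sum_filter_antidiagonalTuple_comp_perm_div_prod P (Equiv.swap 1 j)
        (fun v => (-1 : K) ^ (v 0 + v 1))
  have hexpand : ∀ v ∈ A, (∏ i, (1 + (-1 : K) ^ v i)) * (1 / ∏ i, (v i : K)) =
      2 * (1 / ∏ i, (v i : K) + ((-1) ^ v 0 / ∏ i, (v i : K) + (-1) ^ v 1 / ∏ i, (v i : K) +
        (-1) ^ v 2 / ∏ i, (v i : K) + (-1) ^ v 3 / ∏ i, (v i : K)) +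
        ((-1) ^ (v 0 + v 1) / ∏ i, (v i : K) + (-1) ^ (v 0 + v 2) / ∏ i, (v i : K) +
          (-1) ^ (v 0 + v 3) / ∏ i, (v i : K))) := by
    intro v hv
    have hsum : Even (v 0 + v 1 + v 2 + v 3) := by
      simp only [A, mem_filter, mem_antidiagonalTuple, Fin.sum_univ_four] at hv
      exact hv.1 ▸ even_two_mul n
    have hsq : ∀ i, ((-1 : K) ^ v i) ^ 2 = 1 := fun i => by
      rw [← pow_mul, mul_comm, pow_mul, neg_one_sq, one_pow]
    rw [Fin.prod_univ_four (fun i => 1 + (-1 : K) ^ v i),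
      one_add_mul_one_add_mul_one_add_mul_one_add_of_mul_eq_one (hsq 0) (hsq 1) (hsq 2) (hsq 3)
        (by simp only [← pow_add, hsum.neg_one_pow])]
    simp only [pow_add]
    ring
  have hdouble : ∀ w : Fin 4 → ℕ,
      2 ^ 4 * (1 / ∏ i, ((2 * w i : ℕ) : K)) = 1 / ∏ i, (w i : K) := by
    intro w
    simp only [Nat.cast_mul, Nat.cast_ofNat, prod_mul_distrib, prod_const, card_univ,
      Fintype.card_fin]
    field_simp
  have hmaster := sum_filter_antidiagonalTuple_prod_one_add_neg_one_pow_mul P (n := n) hP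
    (fun v : Fin 4 → ℕ => 1 / ∏ i, (v i : K))
  simp only [mul_sum, hdouble] at hmaster
  rw [sum_congr rfl hexpand, ← mul_sum] at hmaster
  simp only [sum_add_distrib] at hmaster
  rw [hsingle 1, hsingle 2, hsingle 3, hpair 2 (by decide), hpair 3 (by decide)] at hmaster
  rw [← hmaster, ← mul_assoc, one_div_mul_cancel two_ne_zero, one_mul]
  ring

theorem alt_four_sum_eq_harmonic_sums_general (p : ℕ) (hp : p.Prime) (hp5 : 5 ≤ p)
    (r : ℕ) :
    (4 * (∑ v ∈ (Finset.Nat.antidiagonalTuple 4 (2 * p ^ r)).filter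
          (fun v => ∀ i, 0 < v i ∧ Nat.Coprime (v i) p),
        (-1 : ℚ) ^ (v 0) / ((v 0 : ℚ) * (v 1 : ℚ) * (v 2 : ℚ) * (v 3 : ℚ))) +
     3 * (∑ v ∈ (Finset.Nat.antidiagonalTuple 4 (2 * p ^ r)).filter
          (fun v => ∀ i, 0 < v i ∧ Nat.Coprime (v i) p),
        (-1 : ℚ) ^ (v 0 + v 1) / ((v 0 : ℚ) * (v 1 : ℚ) * (v 2 : ℚ) * (v 3 : ℚ)))) =
    (1 / 2 : ℚ) * (∑ v ∈ (Finset.Nat.antidiagonalTuple 4 (p ^ r)).filter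
          (fun v => ∀ i, 0 < v i ∧ Nat.Coprime (v i) p),
        1 / ((v 0 : ℚ) * (v 1 : ℚ) * (v 2 : ℚ) * (v 3 : ℚ))) -
      (∑ v ∈ (Finset.Nat.antidiagonalTuple 4 (2 * p ^ r)).filter
          (fun v => ∀ i, 0 < v i ∧ Nat.Coprime (v i) p),
        1 / ((v 0 : ℚ) * (v 1 : ℚ) * (v 2 : ℚ) * (v 3 : ℚ))) := by
  have hodd : Odd p := hp.odd_of_ne_two (by omega)
  have hP : ∀ m, (0 < 2 * m ∧ Nat.Coprime (2 * m) p) ↔ (0 < m ∧ Nat.Coprime m p) := fun m => by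
    simp [Nat.coprime_mul_iff_left, hodd]
  simpa only [Fin.prod_univ_four] using
    four_mul_sum_neg_one_pow_add_three_mul_sum_neg_one_pow (K := ℚ)
      (fun m => 0 < m ∧ Nat.Coprime m p) hP (p ^ r)

theorem alt_four_sum_eq_harmonic_sums (p : ℕ) (hp : p.Prime) (hp5 : 5 ≤ p)
    (r : ℕ) (hr : 0 < r) :
    (4 * (∑ v ∈ (Finset.Nat.antidiagonalTuple 4 (2 * p ^ r)).filter
          (fun v => ∀ i, 0 < v i ∧ Nat.Coprime (v i) p),
        (-1 : ℚ) ^ (v 0) / ((v 0 : ℚ) * (v 1 : ℚ) * (v 2 : ℚ) * (v 3 : ℚ))) +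
     3 * (∑ v ∈ (Finset.Nat.antidiagonalTuple 4 (2 * p ^ r)).filter
          (fun v => ∀ i, 0 < v i ∧ Nat.Coprime (v i) p),
        (-1 : ℚ) ^ (v 0 + v 1) / ((v 0 : ℚ) * (v 1 : ℚ) * (v 2 : ℚ) * (v 3 : ℚ)))) =
    (1 / 2 : ℚ) * (∑ v ∈ (Finset.Nat.antidiagonalTuple 4 (p ^ r)).filter
          (fun v => ∀ i, 0 < v i ∧ Nat.Coprime (v i) p),
        1 / ((v 0 : ℚ) * (v 1 : ℚ) * (v 2 : ℚ) * (v 3 : ℚ))) -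
      (∑ v ∈ (Finset.Nat.antidiagonalTuple 4 (2 * p ^ r)).filter
          (fun v => ∀ i, 0 < v i ∧ Nat.Coprime (v i) p),
        1 / ((v 0 : ℚ) * (v 1 : ℚ) * (v 2 : ℚ) * (v 3 : ℚ))) :=
  alt_four_sum_eq_harmonic_sums_general p hp hp5 r
end

section
/- Let p > 5 be a prime and r a positive integer. Let T1 = Σ_{i1+⋯+i5=2p^r, all ij∈𝒫_p} (-1)^{i1}/(i1·i2·i3·i4·i5) and T2 = Σ_{i1+⋯+i5=2p^r, all ij∈𝒫_p} (-1)^{i1+i2}/(i1·i2·i3·i4·i5), where each sum is over quintuples of positive integers summing to 2p^r with all entries coprime to p. Then the following exact identity of rational numbers holds: T1 + 2·T2 = (1/10)·Σ_{i1+⋯+i5=p^r, all ij∈𝒫_p} 1/(i1·i2·i3·i4·i5) − (2/10)·Σ_{i1+⋯+i5=2p^r, all ij∈𝒫_p} 1/(i1·i2·i3·i4·i5). -/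
open Finset

private def Sset (p n : ℕ) : Finset (Fin 5 → ℕ) :=
  (Finset.Nat.antidiagonalTuple 5 n).filter (fun v => ∀ i, 0 < v i ∧ Nat.Coprime (v i) p)

private lemma mem_Sset {p n : ℕ} {v : Fin 5 → ℕ} :
    v ∈ Sset p n ↔ (∑ i, v i) = n ∧ ∀ i, 0 < v i ∧ Nat.Coprime (v i) p := by
  simp [Sset, Finset.Nat.mem_antidiagonalTuple]

private noncomputable def Pq (v : Fin 5 → ℕ) : ℚ := ∏ i, (v i : ℚ)

private lemma Pq_eq (v : Fin 5 → ℕ) :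
    Pq v = (v 0 : ℚ) * (v 1 : ℚ) * (v 2 : ℚ) * (v 3 : ℚ) * (v 4 : ℚ) := by
  simp [Pq, Fin.prod_univ_five]

private lemma Pq_perm (v : Fin 5 → ℕ) (σ : Equiv.Perm (Fin 5)) : Pq (v ∘ σ) = Pq v :=
  Equiv.prod_comp σ (fun i => (v i : ℚ))

private lemma sum_perm (p n : ℕ) (σ : Equiv.Perm (Fin 5)) (f : (Fin 5 → ℕ) → ℚ) :
    ∑ v ∈ Sset p n, f (v ∘ σ) = ∑ v ∈ Sset p n, f v := by
  refine Finset.sum_nbij' (fun v => v ∘ σ) (fun v => v ∘ σ.symm) ?_ ?_ ?_ ?_ ?_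
  · intro v hv
    rw [mem_Sset] at hv ⊢
    exact ⟨by rw [← hv.1]; exact Equiv.sum_comp σ v, fun i => hv.2 (σ i)⟩
  · intro v hv
    rw [mem_Sset] at hv ⊢
    exact ⟨by rw [← hv.1]; exact Equiv.sum_comp σ.symm v, fun i => hv.2 (σ.symm i)⟩
  · intro v _; funext i; simp
  · intro v _; funext i; simp
  · intro v _; rfl

private lemma lemA (p n : ℕ) :
    ∑ v ∈ Sset p n, (∑ j, (-1:ℚ)^(v j)) / Pq v
      = 5 * ∑ v ∈ Sset p n, (-1:ℚ)^(v 0) / Pq v := by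
  calc ∑ v ∈ Sset p n, (∑ j, (-1:ℚ)^(v j)) / Pq v
      = ∑ v ∈ Sset p n, ∑ j, (-1:ℚ)^(v j) / Pq v := by
        simp [Finset.sum_div]
    _ = ∑ j : Fin 5, ∑ v ∈ Sset p n, (-1:ℚ)^(v j) / Pq v := Finset.sum_comm
    _ = ∑ j : Fin 5, ∑ v ∈ Sset p n, (-1:ℚ)^(v 0) / Pq v := by
        refine Finset.sum_congr rfl fun j _ => ?_
        rw [← sum_perm p n (Equiv.swap 0 j) (fun v => (-1:ℚ)^(v 0) / Pq v)]
        refine Finset.sum_congr rfl fun v _ => ?_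
        simp only [Function.comp, Pq_perm]
        rw [show (Equiv.swap (0 : Fin 5) j) 0 = j from Equiv.swap_apply_left 0 j]
    _ = 5 * ∑ v ∈ Sset p n, (-1:ℚ)^(v 0) / Pq v := by
        simp [Finset.sum_const, Finset.card_univ]

private lemma sq_expand (v : Fin 5 → ℕ) :
    (∑ j, (-1:ℚ)^(v j))^2 - 5 = ∑ j : Fin 5, ∑ l ∈ Finset.univ.erase j, (-1:ℚ)^(v j + v l) := by
  have h : (∑ j, (-1:ℚ)^(v j))^2 = ∑ j : Fin 5, ∑ l : Fin 5, (-1:ℚ)^(v j + v l) := by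
    rw [sq, Finset.sum_mul_sum]
    simp [pow_add]
  have h2 : ∀ j : Fin 5, ∑ l : Fin 5, (-1:ℚ)^(v j + v l)
      = (-1:ℚ)^(v j + v j) + ∑ l ∈ Finset.univ.erase j, (-1:ℚ)^(v j + v l) :=
    fun j => (Finset.add_sum_erase _ _ (Finset.mem_univ j)).symm
  have h3 : ∀ j : Fin 5, (-1:ℚ)^(v j + v j) = 1 := by
    intro j; rw [← two_mul, pow_mul]; norm_num
  rw [h]
  simp only [h2, h3, Finset.sum_add_distrib, Finset.sum_const, Finset.card_univ]
  simp

private lemma lemB (p n : ℕ) :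
    ∑ v ∈ Sset p n, ((∑ j, (-1:ℚ)^(v j))^2 - 5) / Pq v
      = 20 * ∑ v ∈ Sset p n, (-1:ℚ)^(v 0 + v 1) / Pq v := by
  have key : ∀ (j l : Fin 5), l ≠ j →
      ∑ v ∈ Sset p n, (-1:ℚ)^(v j + v l) / Pq v
        = ∑ v ∈ Sset p n, (-1:ℚ)^(v 0 + v 1) / Pq v := by
    intro j l hlj
    have ht0 : (Equiv.swap (0:Fin 5) j) l ≠ 0 := by
      intro h
      exact hlj ((Equiv.swap 0 j).injective (h.trans (Equiv.swap_apply_right 0 j).symm))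
    have hs0 : (Equiv.swap (1:Fin 5) ((Equiv.swap 0 j) l)) 0 = 0 :=
      Equiv.swap_apply_of_ne_of_ne (by decide) (Ne.symm ht0)
    have h0 : ((Equiv.swap (0:Fin 5) j) * Equiv.swap 1 ((Equiv.swap 0 j) l)) 0 = j := by
      rw [Equiv.Perm.mul_apply, hs0, Equiv.swap_apply_left]
    have h1 : ((Equiv.swap (0:Fin 5) j) * Equiv.swap 1 ((Equiv.swap 0 j) l)) 1 = l := by
      rw [Equiv.Perm.mul_apply, Equiv.swap_apply_left, Equiv.swap_apply_self]
    rw [← sum_perm p n ((Equiv.swap (0:Fin 5) j) * Equiv.swap 1 ((Equiv.swap 0 j) l))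
      (fun v => (-1:ℚ)^(v 0 + v 1) / Pq v)]
    refine Finset.sum_congr rfl fun v _ => ?_
    simp only [Function.comp, Pq_perm, h0, h1]
  calc ∑ v ∈ Sset p n, ((∑ j, (-1:ℚ)^(v j))^2 - 5) / Pq v
      = ∑ v ∈ Sset p n, ∑ j : Fin 5, ∑ l ∈ Finset.univ.erase j, (-1:ℚ)^(v j + v l) / Pq v := by
        refine Finset.sum_congr rfl fun v _ => ?_
        rw [sq_expand, Finset.sum_div]
        exact Finset.sum_congr rfl fun j _ => Finset.sum_div _ _ _
    _ = ∑ j : Fin 5, ∑ v ∈ Sset p n, ∑ l ∈ Finset.univ.erase j, (-1:ℚ)^(v j + v l) / Pq v :=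
        Finset.sum_comm
    _ = ∑ j : Fin 5, ∑ l ∈ Finset.univ.erase j, ∑ v ∈ Sset p n, (-1:ℚ)^(v j + v l) / Pq v :=
        Finset.sum_congr rfl fun j _ => Finset.sum_comm
    _ = ∑ j : Fin 5, ∑ _l ∈ Finset.univ.erase j, ∑ v ∈ Sset p n, (-1:ℚ)^(v 0 + v 1) / Pq v := by
        refine Finset.sum_congr rfl fun j _ => Finset.sum_congr rfl fun l hl => ?_
        exact key j l (Finset.ne_of_mem_erase hl)
    _ = 20 * ∑ v ∈ Sset p n, (-1:ℚ)^(v 0 + v 1) / Pq v := by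
        simp [Finset.sum_const, Finset.card_erase_of_mem, Finset.card_univ]
        ring

open Classical in
private lemma keyC (v : Fin 5 → ℕ) (hv : Even (∑ i, v i)) :
    (∑ j, (-1:ℚ)^(v j))^2 + 2 * (∑ j, (-1:ℚ)^(v j)) - 3
      = if ∀ i, Even (v i) then 32 else 0 := by
  set k := (Finset.univ.filter fun i : Fin 5 => Odd (v i)).card with hk
  have hkeven : Even k := (Finset.even_sum_iff_even_card_odd v).mp hv
  have hk5 : k ≤ 5 := le_trans (Finset.card_filter_le _ _) (by simp)
  have hterm : ∀ j : Fin 5, (-1:ℚ)^(v j) = if Odd (v j) then -1 else 1 := by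
    intro j
    by_cases h : Odd (v j)
    · simp [h, h.neg_one_pow]
    · simp [h, (Nat.not_odd_iff_even.mp h).neg_one_pow]
  have hs : (∑ j, (-1:ℚ)^(v j)) = 5 - 2 * (k : ℚ) := by
    simp only [hterm]
    rw [Finset.sum_ite, Finset.sum_const, Finset.sum_const]
    have hcard : (Finset.univ.filter fun i : Fin 5 => ¬ Odd (v i)).card = 5 - k := by
      have := Finset.card_filter_add_card_filter_not
        (s := (Finset.univ : Finset (Fin 5))) (p := fun i => Odd (v i))
      simp only [Finset.card_univ, Fintype.card_fin] at this
      omega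
    rw [hcard, ← hk]
    simp only [nsmul_eq_mul, mul_one, mul_neg_one, Nat.cast_sub hk5]
    push_cast
    ring
  have hall : (∀ i, Even (v i)) ↔ k = 0 := by
    rw [hk, Finset.card_eq_zero, Finset.filter_eq_empty_iff]
    simp [Nat.not_odd_iff_even]
  rw [hs]
  obtain ⟨m, hm⟩ := hkeven
  by_cases h : ∀ i, Even (v i)
  · have : k = 0 := hall.mp h
    simp [h, this]
    norm_num
  · have hk0 : k ≠ 0 := fun h0 => h (hall.mpr h0)
    have : k = 2 ∨ k = 4 := by omega
    rcases this with h2 | h2 <;> simp [h, h2] <;> norm_num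

open Classical in
private lemma lemD (p : ℕ) (hp : p.Prime) (hp5 : 5 < p) (m : ℕ) :
    ∑ v ∈ (Sset p (2 * m)).filter (fun v => ∀ i, Even (v i)), (32:ℚ) / Pq v
      = ∑ w ∈ Sset p m, 1 / Pq w := by
  have hcop2 : Nat.Coprime 2 p :=
    Nat.coprime_two_left.mpr (hp.odd_of_ne_two (by omega))
  refine (Finset.sum_nbij' (fun w => fun i => 2 * w i) (fun v => fun i => v i / 2)
    ?_ ?_ ?_ ?_ ?_).symm
  · intro w hw
    rw [mem_Sset] at hw
    rw [Finset.mem_filter, mem_Sset]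
    refine ⟨⟨by rw [← Finset.mul_sum, hw.1], fun i => ?_⟩, fun i => ⟨w i, by ring⟩⟩
    exact ⟨by have := (hw.2 i).1; omega, Nat.Coprime.mul hcop2 (hw.2 i).2⟩
  · intro v hv
    rw [Finset.mem_filter, mem_Sset] at hv
    obtain ⟨⟨hsum, hvc⟩, heven⟩ := hv
    rw [mem_Sset]
    have hdvd : ∀ i, 2 ∣ v i := fun i => (heven i).two_dvd
    refine ⟨?_, fun i => ⟨?_, ?_⟩⟩
    · have : 2 * ∑ i, v i / 2 = 2 * m := by
        rw [Finset.mul_sum, ← hsum]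
        exact Finset.sum_congr rfl fun i _ => Nat.mul_div_cancel' (hdvd i)
      omega
    · have h1 := (hvc i).1
      have h2 := hdvd i
      omega
    · exact Nat.Coprime.coprime_dvd_left ⟨2, (Nat.div_mul_cancel (hdvd i)).symm⟩ (hvc i).2
  · intro w _; dsimp only; funext i; omega
  · intro v hv
    dsimp only
    rw [Finset.mem_filter] at hv
    funext i
    have := (hv.2 i).two_dvd
    omega
  · intro w hw
    rw [mem_Sset] at hw
    have hP2 : Pq (fun i => 2 * w i) = 32 * Pq w := by
      rw [Pq, Pq]
      push_cast
      rw [Finset.prod_mul_distrib, Finset.prod_const, Finset.card_univ]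
      norm_num
    rw [hP2, ← div_div]
    norm_num


private lemma Pq_ne_zero {p n : ℕ} {v : Fin 5 → ℕ} (hv : v ∈ Sset p n) : Pq v ≠ 0 := by
  rw [mem_Sset] at hv
  rw [Pq]
  exact Finset.prod_ne_zero_iff.mpr fun i _ =>
    Nat.cast_ne_zero.mpr (hv.2 i).1.ne'

private lemma Sset_def (p n : ℕ) :
    (Finset.Nat.antidiagonalTuple 5 n).filter (fun v => ∀ i, 0 < v i ∧ Nat.Coprime (v i) p)
      = Sset p n := rfl

theorem alt_five_sum_eq_harmonic_sums (p : ℕ) (hp : p.Prime) (hp5 : 5 < p)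
    (r : ℕ) (hr : 0 < r) :
    ((∑ v ∈ (Finset.Nat.antidiagonalTuple 5 (2 * p ^ r)).filter
          (fun v => ∀ i, 0 < v i ∧ Nat.Coprime (v i) p),
        (-1 : ℚ) ^ (v 0) /
          ((v 0 : ℚ) * (v 1 : ℚ) * (v 2 : ℚ) * (v 3 : ℚ) * (v 4 : ℚ))) +
     2 * (∑ v ∈ (Finset.Nat.antidiagonalTuple 5 (2 * p ^ r)).filter
          (fun v => ∀ i, 0 < v i ∧ Nat.Coprime (v i) p),
        (-1 : ℚ) ^ (v 0 + v 1) /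
          ((v 0 : ℚ) * (v 1 : ℚ) * (v 2 : ℚ) * (v 3 : ℚ) * (v 4 : ℚ)))) =
    (1 / 10 : ℚ) * (∑ v ∈ (Finset.Nat.antidiagonalTuple 5 (p ^ r)).filter
          (fun v => ∀ i, 0 < v i ∧ Nat.Coprime (v i) p),
        1 / ((v 0 : ℚ) * (v 1 : ℚ) * (v 2 : ℚ) * (v 3 : ℚ) * (v 4 : ℚ))) -
      (2 / 10 : ℚ) * (∑ v ∈ (Finset.Nat.antidiagonalTuple 5 (2 * p ^ r)).filter
          (fun v => ∀ i, 0 < v i ∧ Nat.Coprime (v i) p),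
        1 / ((v 0 : ℚ) * (v 1 : ℚ) * (v 2 : ℚ) * (v 3 : ℚ) * (v 4 : ℚ))) := by
  classical
  simp only [Sset_def, ← Pq_eq]
  have hA := lemA p (2 * p ^ r)
  have hB := lemB p (2 * p ^ r)
  have hC : ∑ v ∈ Sset p (2 * p ^ r),
      ((∑ j, (-1:ℚ)^(v j))^2 + 2 * (∑ j, (-1:ℚ)^(v j)) - 3) / Pq v
        = ∑ w ∈ Sset p (p ^ r), 1 / Pq w := by
    have h1 : ∀ v ∈ Sset p (2 * p ^ r),
        ((∑ j, (-1:ℚ)^(v j))^2 + 2 * (∑ j, (-1:ℚ)^(v j)) - 3) / Pq v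
          = if ∀ i, Even (v i) then (32:ℚ) / Pq v else 0 := by
      intro v hv
      rw [mem_Sset] at hv
      have heven : Even (∑ i, v i) := by rw [hv.1]; exact ⟨p ^ r, by ring⟩
      rw [keyC v heven]
      split <;> simp
    rw [Finset.sum_congr rfl h1, ← Finset.sum_filter]
    exact lemD p hp hp5 (p ^ r)
  have hsplit : ∑ v ∈ Sset p (2 * p ^ r),
      ((∑ j, (-1:ℚ)^(v j))^2 + 2 * (∑ j, (-1:ℚ)^(v j)) - 3) / Pq v
        = (∑ v ∈ Sset p (2 * p ^ r), ((∑ j, (-1:ℚ)^(v j))^2 - 5) / Pq v)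
          + 2 * (∑ v ∈ Sset p (2 * p ^ r), (∑ j, (-1:ℚ)^(v j)) / Pq v)
          + 2 * (∑ v ∈ Sset p (2 * p ^ r), 1 / Pq v) := by
    rw [Finset.mul_sum, Finset.mul_sum, ← Finset.sum_add_distrib, ← Finset.sum_add_distrib]
    refine Finset.sum_congr rfl fun v hv => ?_
    have hne := Pq_ne_zero hv
    field_simp
    ring
  linarith [hA, hB, hC, hsplit]
end
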